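/- arXiv:1003.2810 — 2 statements merged into one kernel-verified Lean document; each statement's English description precedes it below -/
import Mathlib

section
/- Let f̃ : ℤ → ℤ be an order-preserving map with f̃(a + n) = f̃(a) + m for all a (where n, m ≥ 1), representing a morphism f : [n] → [m] in the cyclic category. Define f_♯ : ℤ → ℤ by f_♯(a) = max { b ∈ ℤ | f̃(b) ≤ a }. Then f_♯ is well-defined (the set is nonempty and bounded above), order-preserving, and satisfies f_♯(a + m) = f_♯(a) + n for all a ∈ ℤ. -/
/-! The set `{b | f b ≤ a}` is a nonempty down-set of `ℤ` that is bounded above, because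
`f (k * n) = f 0 + k * m` tends to `∓∞` as `k → ∓∞`. Its supremum is therefore attained, so
`f_♯` is the upper adjoint of `f`: `b ≤ f_♯ a ↔ f b ≤ a`. Monotonicity of `f_♯` and the
relation `f_♯ (a + m) = f_♯ a + n` both follow formally from this Galois connection. -/

theorem GaloisConnection.u_add_of_l_add {α β : Type*} [AddCommGroup α] [PartialOrder α]
    [IsOrderedAddMonoid α] [AddCommGroup β] [PartialOrder β] [IsOrderedAddMonoid β]
    {l : α → β} {u : β → α} (gc : GaloisConnection l u) {n : α} {m : β}
    (hl : ∀ b, l (b + n) = l b + m) (a : β) : u (a + m) = u a + n := by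
  refine eq_of_forall_le_iff fun b => ?_
  calc b ≤ u (a + m) ↔ l (b - n) + m ≤ a + m := by rw [← gc, ← hl, sub_add_cancel]
    _ ↔ b ≤ u a + n := by rw [add_le_add_iff_right, gc, sub_le_iff_le_add]

section ShiftEquivariant

variable {n m : ℤ} {f : ℤ → ℤ}

theorem map_mul_eq_of_map_add (hper : ∀ a, f (a + n) = f a + m) (k : ℤ) :
    f (k * n) = f 0 + k * m := by
  simpa using AddConstMapClass.map_add_zsmul (⟨f, hper⟩ : AddConstMap ℤ ℤ n m) 0 k

theorem exists_map_le_of_map_add (hper : ∀ a, f (a + n) = f a + m) (hm : 1 ≤ m) (a : ℤ) :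
    ∃ b, f b ≤ a := by
  refine ⟨-|a - f 0| * n, ?_⟩
  rw [map_mul_eq_of_map_add hper]
  nlinarith [abs_nonneg (a - f 0), neg_abs_le (a - f 0)]

theorem exists_lt_map_of_map_add (hper : ∀ a, f (a + n) = f a + m) (hm : 1 ≤ m) (a : ℤ) :
    ∃ b, a < f b := by
  refine ⟨(|a - f 0| + 1) * n, ?_⟩
  rw [map_mul_eq_of_map_add hper]
  nlinarith [abs_nonneg (a - f 0), le_abs_self (a - f 0)]

end ShiftEquivariant

theorem bddAbove_setOf_map_le {f : ℤ → ℤ} (hmono : Monotone f) {a c : ℤ} (hc : a < f c) :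
    BddAbove {b | f b ≤ a} :=
  ⟨c, fun _ hb => (hmono.reflect_lt (lt_of_le_of_lt hb hc)).le⟩

theorem le_csSup_setOf_map_le_iff {f : ℤ → ℤ} (hmono : Monotone f) {a : ℤ}
    (hne : {b | f b ≤ a}.Nonempty) (hbdd : BddAbove {b | f b ≤ a}) (b : ℤ) :
    b ≤ sSup {b | f b ≤ a} ↔ f b ≤ a :=
  ⟨fun hb => (hmono hb).trans (Int.csSup_mem hne hbdd), fun hb => le_csSup hbdd hb⟩

theorem stmt_1_general (n m : ℤ) (hm : 1 ≤ m)
    (f : ℤ → ℤ) (hmono : Monotone f) (hper : ∀ a : ℤ, f (a + n) = f a + m) :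
    (∀ a : ℤ, {b : ℤ | f b ≤ a}.Nonempty ∧ BddAbove {b : ℤ | f b ≤ a}) ∧
    Monotone (fun a : ℤ => sSup {b : ℤ | f b ≤ a}) ∧
    (∀ a : ℤ, sSup {b : ℤ | f b ≤ a + m} = sSup {b : ℤ | f b ≤ a} + n) := by
  have hwd : ∀ a : ℤ, {b : ℤ | f b ≤ a}.Nonempty ∧ BddAbove {b : ℤ | f b ≤ a} := fun a =>
    ⟨exists_map_le_of_map_add hper hm a,
      (exists_lt_map_of_map_add hper hm a).elim fun _ hc => bddAbove_setOf_map_le hmono hc⟩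
  have gc : GaloisConnection f (fun a => sSup {b : ℤ | f b ≤ a}) := fun b a =>
    (le_csSup_setOf_map_le_iff hmono (hwd a).1 (hwd a).2 b).symm
  exact ⟨hwd, gc.monotone_u, gc.u_add_of_l_add hper⟩

/-- The duality `f ↦ f_♯` of the cyclic category: for an order-preserving
`f : ℤ → ℤ` with `f (a + n) = f a + m`, the map `a ↦ max {b | f b ≤ a}` is
well defined (the set is nonempty and bounded above), order-preserving, and
satisfies `f_♯ (a + m) = f_♯ a + n`. -/
theorem stmt_1 (n m : ℤ) (hn : 1 ≤ n) (hm : 1 ≤ m)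
    (f : ℤ → ℤ) (hmono : Monotone f) (hper : ∀ a : ℤ, f (a + n) = f a + m) :
    (∀ a : ℤ, {b : ℤ | f b ≤ a}.Nonempty ∧ BddAbove {b : ℤ | f b ≤ a}) ∧
    Monotone (fun a : ℤ => sSup {b : ℤ | f b ≤ a}) ∧
    (∀ a : ℤ, sSup {b : ℤ | f b ≤ a + m} = sSup {b : ℤ | f b ≤ a} + n) :=
  stmt_1_general n m hm f hmono hper
end

section
/- Let C be a small category with a factorization system (C_v, C_h), let k be a commutative ring, and denote by v : C_v → C, h : C_h → C, and h̄ : C̄ → C_v, v̄ : C̄ → C_h the inclusion functors, where C̄ is the maximal groupoid of C (all objects, only isomorphisms). Assume that for every object c'' the automorphism group Aut(c'') acts freely on C_h(c, c'') × C_v(c'', c') for all c, c' (as in the factorization bijection). Then for representable functors: (v^* ∘ h_!)(k_c) ≅ (h̄_! ∘ v̄^*)(k_c) naturally, where k_c ∈ Fun(C_h, k-Mod) is the representable functor k_c(c') = k[C_h(c, c')] and h_!, h̄_! denote left Kan extensions. Concretely, prove the underlying isomorphism of k-modules: k[C(c, c')] ≅ ⊕_{c''} k[C_h(c, c'')] ⊗_{k[Aut(c'')]}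 k[C_v(c'', c')] for all c ∈ C_h, c' ∈ C_v, where the sum is over isomorphism classes. -/
open CategoryTheory

/-- The set of isomorphism classes of objects of `C` (indexing the direct sum over
the middle objects of factorizations). -/
abbrev SkelIdx (C : Type) [Category C] := Quotient (isIsomorphicSetoid C)

/-- Pairs of a map in `C_h` from `c` to `z` and a map in `C_v` from `z` to `c'`. -/
abbrev PairsHV (C : Type) [Category C] (V H : MorphismProperty C) (c z c' : C) :=
  {p : (c ⟶ z) × (z ⟶ c') // H p.1 ∧ V p.2}

/-- The balanced tensor product `k[C_h(c,z)] ⊗_{k[Aut z]} k[C_v(z,c')]`, realized as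
the quotient of the free module on pairs by the span of the differences
`(h ≫ g, v) − (h, g ≫ v)` for automorphisms `g` of `z`. -/
abbrev BalMod (k : Type) [CommRing k] (C : Type) [Category C]
    (V H : MorphismProperty C) (c z c' : C) :=
  (PairsHV C V H c z c' →₀ k) ⧸
    Submodule.span k
      {x : PairsHV C V H c z c' →₀ k |
        ∃ (g : z ≅ z) (a b : PairsHV C V H c z c'),
          a.val.1 = b.val.1 ≫ g.hom ∧ a.val.2 = g.inv ≫ b.val.2 ∧
          x = Finsupp.single a 1 - Finsupp.single b 1}

namespace Stmt19Aux

variable {C : Type} [SmallCategory C] (V H : MorphismProperty C)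

/-- The orbit equivalence relation on pairs. -/
def pairRel (c z c' : C) : Setoid (PairsHV C V H c z c') where
  r a b := ∃ g : z ≅ z, a.val.1 = b.val.1 ≫ g.hom ∧ a.val.2 = g.inv ≫ b.val.2
  iseqv := by
    constructor
    · intro a; exact ⟨Iso.refl z, by simp, by simp⟩
    · rintro a b ⟨g, h1, h2⟩
      refine ⟨g.symm, ?_, ?_⟩
      · simp [h1]
      · simp [h2]
    · rintro a b d ⟨g, h1, h2⟩ ⟨g', h1', h2'⟩
      refine ⟨g' ≪≫ g, ?_, ?_⟩
      · simp [h1, h1']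
      · simp [h2, h2']

/-- The balanced tensor product is free on the orbit set. -/
noncomputable def balEquiv (k : Type) [CommRing k] (c z c' : C) :
    BalMod k C V H c z c' ≃ₗ[k] (Quotient (pairRel V H c z c') →₀ k) := by
  classical
  refine LinearEquiv.ofLinear
    (Submodule.liftQ _ (Finsupp.lmapDomain k k (Quotient.mk (pairRel V H c z c'))) ?_)
    ((Submodule.mkQ _).comp (Finsupp.lmapDomain k k Quotient.out)) ?_ ?_
  · rw [Submodule.span_le]
    rintro x ⟨g, a, b, h1, h2, rfl⟩
    simp only [SetLike.mem_coe, LinearMap.mem_ker, map_sub,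
      Finsupp.lmapDomain_apply, Finsupp.mapDomain_single]
    rw [Quotient.sound (⟨g, h1, h2⟩ : (pairRel V H c z c') a b)]
    simp
  · apply Finsupp.lhom_ext
    intro q r
    simp only [LinearMap.comp_apply, Finsupp.lmapDomain_apply, Finsupp.mapDomain_single,
      Submodule.mkQ_apply, Submodule.liftQ_apply, LinearMap.id_apply]
    rw [Quotient.out_eq]
  · apply Submodule.linearMap_qext
    apply Finsupp.lhom_ext
    intro a r
    simp only [LinearMap.comp_apply, Submodule.mkQ_apply, Submodule.liftQ_apply,
      Finsupp.lmapDomain_apply, Finsupp.mapDomain_single, LinearMap.id_apply]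
    rw [Submodule.Quotient.eq]
    obtain ⟨g, h1, h2⟩ := Quotient.mk_out (s := pairRel V H c z c') a
    have hmem : (Finsupp.single (Quotient.mk (pairRel V H c z c') a).out (1 : k)
        - Finsupp.single a 1) ∈
        Submodule.span k
          {x : PairsHV C V H c z c' →₀ k |
            ∃ (g : z ≅ z) (a b : PairsHV C V H c z c'),
              a.val.1 = b.val.1 ≫ g.hom ∧ a.val.2 = g.inv ≫ b.val.2 ∧
              x = Finsupp.single a 1 - Finsupp.single b 1} :=
      Submodule.subset_span ⟨g, _, a, h1, h2, rfl⟩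
    have := Submodule.smul_mem _ r hmem
    simpa [smul_sub, Finsupp.smul_single] using this

end Stmt19Aux

/-- For a factorization system `(C_v, C_h)` on a small category `C` with free
`Aut`-actions on factorizations, the free `k`-module on `C(c,c')` is isomorphic to
the direct sum, over isomorphism classes of objects `z`, of the balanced tensor
products `k[C_h(c,z)] ⊗_{k[Aut z]} k[C_v(z,c')]`. -/
theorem stmt_19 (k : Type) [CommRing k] (C : Type) [SmallCategory C]
    (V H : MorphismProperty C)
    (hVi : ∀ (X Y : C) (f : X ⟶ Y), IsIso f → V f)
    (hHi : ∀ (X Y : C) (f : X ⟶ Y), IsIso f → H f)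
    (hVc : ∀ (X Y Z : C) (f : X ⟶ Y) (g : Y ⟶ Z), V f → V g → V (f ≫ g))
    (hHc : ∀ (X Y Z : C) (f : X ⟶ Y) (g : Y ⟶ Z), H f → H g → H (f ≫ g))
    (hfact : ∀ (X Y : C) (f : X ⟶ Y),
      ∃ (Z : C) (h : X ⟶ Z) (v : Z ⟶ Y), H h ∧ V v ∧ h ≫ v = f)
    (huniq : ∀ (X Y Z Z' : C) (h : X ⟶ Z) (v : Z ⟶ Y) (h' : X ⟶ Z') (v' : Z' ⟶ Y),
      H h → V v → H h' → V v' → h ≫ v = h' ≫ v' →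
      ∃! g : Z ≅ Z', h ≫ g.hom = h' ∧ g.hom ≫ v' = v)
    (hfree : ∀ (c z c' : C) (g : z ≅ z) (h : c ⟶ z) (v : z ⟶ c'),
      H h → V v → h ≫ g.hom = h → g.inv ≫ v = v → g = Iso.refl z)
    (c c' : C) :
    Nonempty (((c ⟶ c') →₀ k) ≃ₗ[k]
      DirectSum (SkelIdx C) (fun s => BalMod k C V H c (Quotient.out s) c')) := by
  classical
  open Stmt19Aux in
  -- the map from factorization data to morphisms
  let G : (Σ s : SkelIdx C, Quotient (pairRel V H c s.out c')) → (c ⟶ c') :=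
    fun x => Quotient.liftOn x.2 (fun p => p.val.1 ≫ p.val.2) (by
      rintro a b ⟨g, h1, h2⟩
      simp [h1, h2])
  have hGbij : Function.Bijective G := by
    constructor
    · rintro ⟨s, q⟩ ⟨t, w⟩ hGeq
      induction q using Quotient.ind with | _ p => ?_
      induction w using Quotient.ind with | _ p' => ?_
      have heq : p.val.1 ≫ p.val.2 = p'.val.1 ≫ p'.val.2 := hGeq
      obtain ⟨g, ⟨hg1, hg2⟩, -⟩ := huniq c c' s.out t.out p.val.1 p.val.2 p'.val.1 p'.val.2
        p.2.1 p.2.2 p'.2.1 p'.2.2 heq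
      have hst : s = t := by
        have : Quotient.mk (isIsomorphicSetoid C) s.out
            = Quotient.mk (isIsomorphicSetoid C) t.out := Quotient.sound ⟨g⟩
        rwa [Quotient.out_eq, Quotient.out_eq] at this
      subst hst
      refine congrArg (Sigma.mk s) (Quotient.sound ?_)
      refine ⟨g.symm, ?_, ?_⟩
      · rw [Iso.symm_hom, ← hg1]; simp
      · rw [Iso.symm_inv, hg2]
    · intro f
      obtain ⟨Z, h, v, hH, hV, hcomp⟩ := hfact c c' f
      set s : SkelIdx C := Quotient.mk (isIsomorphicSetoid C) Z with hs
      have he : IsIsomorphic s.out Z := Quotient.mk_out (s := isIsomorphicSetoid C) Z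
      obtain ⟨e⟩ := he
      refine ⟨⟨s, Quotient.mk _ ⟨(h ≫ e.inv, e.hom ≫ v), ?_, ?_⟩⟩, ?_⟩
      · exact hHc _ _ _ _ _ hH (hHi _ _ _ inferInstance)
      · exact hVc _ _ _ _ _ (hVi _ _ _ inferInstance) hV
      · show (h ≫ e.inv) ≫ (e.hom ≫ v) = f
        rw [← hcomp]; simp
  let E : (c ⟶ c') ≃ (Σ s : SkelIdx C, Quotient (pairRel V H c s.out c')) :=
    (Equiv.ofBijective G hGbij).symm
  refine ⟨(Finsupp.domLCongr E).trans ((sigmaFinsuppLequivDFinsupp k).trans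
    (DFinsupp.mapRange.linearEquiv (fun s => (balEquiv V H k c s.out c').symm)))⟩
end
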